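/- arXiv:1111.2269 — 2 statements merged into one kernel-verified Lean document; each statement's English description precedes it below -/
import Mathlib

section
/- Let ν, δ, κ, α > 0 and let N be a positive integer with N² ≥ (8/7)·(α²ν/κ). Then there exist no integers k, l with |k| > N and |l| > N such that ρ_k + ρ_l = ρ_{k+l}. (In the paper's notation: the second resonant index set R₂(j) of the renormalization-group analysis of the generalized Kuramoto–Sivashinsky equation is empty.) -/
/-!
The imaginary part `-δ (k/α)³` of `ρ_k` turns a resonance `ρ_k + ρ_l = ρ_{k+l}` into
`k³ + l³ = (k + l)³`, i.e. `3 k l (k + l) = 0`, so `l = -k` for nonzero `k, l`. The real part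
`-ν (k/α)² + κ (k/α)⁴` is even and vanishes at `0`, so the resonance then forces it to vanish at `k`,
that is `k² = α² ν / κ`. This is impossible once `k² > N² ≥ (8/7) α² ν / κ`.
-/

/-- The eigenvalue (symbol) `ρ_k = -ν (k/α)² - i δ (k/α)³ + κ (k/α)⁴` of the linear part of the
generalized Kuramoto–Sivashinsky equation acting on the Fourier mode `e^{i(k/α)x}`. -/
noncomputable def gksEig (ν δ κ α : ℝ) (k : ℤ) : ℂ :=
  -(ν : ℂ) * ((k : ℂ) / (α : ℂ)) ^ 2 - Complex.I * (δ : ℂ) * ((k : ℂ) / (α : ℂ)) ^ 3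
    + (κ : ℂ) * ((k : ℂ) / (α : ℂ)) ^ 4

lemma add_eq_zero_of_pow_three_add_pow_three {x y : ℝ} (hx : x ≠ 0) (hy : y ≠ 0)
    (h : x ^ 3 + y ^ 3 = (x + y) ^ 3) : x + y = 0 := by
  have hxy : 3 * x * y * (x + y) = 0 := by linear_combination -h
  simpa [hx, hy] using hxy

lemma gksEig_eq_ofReal (ν δ κ α : ℝ) (k : ℤ) :
    gksEig ν δ κ α k = ((-ν * (k / α) ^ 2 + κ * (k / α) ^ 4 : ℝ) : ℂ)
      + ((-δ * (k / α) ^ 3 : ℝ) : ℂ) * Complex.I := by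
  simp only [gksEig]
  push_cast
  ring

lemma gksEig_re (ν δ κ α : ℝ) (k : ℤ) :
    (gksEig ν δ κ α k).re = -ν * (k / α) ^ 2 + κ * (k / α) ^ 4 := by
  rw [gksEig_eq_ofReal, Complex.add_re, Complex.ofReal_re, Complex.re_ofReal_mul, Complex.I_re,
    mul_zero, add_zero]

lemma gksEig_im (ν δ κ α : ℝ) (k : ℤ) : (gksEig ν δ κ α k).im = -δ * (k / α) ^ 3 := by
  rw [gksEig_eq_ofReal, Complex.add_im, Complex.ofReal_im, Complex.im_ofReal_mul, Complex.I_im,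
    mul_one, zero_add]

lemma gksEig_zero (ν δ κ α : ℝ) : gksEig ν δ κ α 0 = 0 := by
  simp [gksEig]

lemma gksEig_re_neg (ν δ κ α : ℝ) (k : ℤ) :
    (gksEig ν δ κ α (-k)).re = (gksEig ν δ κ α k).re := by
  rw [gksEig_re, gksEig_re, Int.cast_neg]
  ring

lemma add_eq_zero_of_gksEig_add_eq {ν δ κ α : ℝ} (hδ : δ ≠ 0) (hα : α ≠ 0) {k l : ℤ}
    (hk : k ≠ 0) (hl : l ≠ 0)
    (h : gksEig ν δ κ α k + gksEig ν δ κ α l = gksEig ν δ κ α (k + l)) : k + l = 0 := by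
  have him := congrArg Complex.im h
  simp only [Complex.add_im, gksEig_im, Int.cast_add] at him
  have hcube : (k / α) ^ 3 + (l / α) ^ 3 = ((k / α) + (l / α) : ℝ) ^ 3 := by
    rw [← add_div]
    exact mul_left_cancel₀ (neg_ne_zero.mpr hδ) (by linear_combination him)
  have := add_eq_zero_of_pow_three_add_pow_three (by simpa [hα] using hk) (by simpa [hα] using hl)
    hcube
  rw [← add_div, div_eq_zero_iff] at this
  exact_mod_cast this.resolve_right hα

lemma sq_eq_of_gksEig_re_eq_zero {ν δ κ α : ℝ} (hκ : κ ≠ 0) (hα : α ≠ 0) {k : ℤ} (hk : k ≠ 0)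
    (h : (gksEig ν δ κ α k).re = 0) : (k : ℝ) ^ 2 = α ^ 2 * ν / κ := by
  rw [gksEig_re] at h
  have hk' : (k : ℝ) ≠ 0 := by exact_mod_cast hk
  field_simp at h ⊢
  have : (k : ℝ) ^ 2 * (κ * k ^ 2 - α ^ 2 * ν) = 0 := by linear_combination h
  linear_combination (mul_eq_zero.mp this).resolve_left (pow_ne_zero 2 hk')

theorem stmt_0_general (ν δ κ α : ℝ) (hν : 0 < ν) (hδ : 0 < δ) (hκ : 0 < κ) (hα : 0 < α)
    (N : ℕ) (hN2 : (N : ℝ) ^ 2 ≥ (8 / 7) * (α ^ 2 * ν / κ)) :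
    ¬ ∃ k l : ℤ, (N : ℤ) < |k| ∧ (N : ℤ) < |l| ∧
      gksEig ν δ κ α k + gksEig ν δ κ α l = gksEig ν δ κ α (k + l) := by
  rintro ⟨k, l, hk, hl, hres⟩
  have hk0 : k ≠ 0 := abs_pos.mp ((Int.natCast_nonneg N).trans_lt hk)
  have hl0 : l ≠ 0 := abs_pos.mp ((Int.natCast_nonneg N).trans_lt hl)
  obtain rfl : l = -k :=
    eq_neg_of_add_eq_zero_right (add_eq_zero_of_gksEig_add_eq hδ.ne' hα.ne' hk0 hl0 hres)
  have hre : (gksEig ν δ κ α k).re = 0 := by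
    have := congrArg Complex.re hres
    rw [add_neg_cancel, Complex.add_re, gksEig_re_neg, gksEig_zero, Complex.zero_re] at this
    linarith
  have hsq := sq_eq_of_gksEig_re_eq_zero hκ.ne' hα.ne' hk0 hre
  have hNk : (N : ℝ) ^ 2 < (k : ℝ) ^ 2 := by
    have : (N : ℤ) ^ 2 < k ^ 2 := sq_lt_sq.mpr (by rwa [abs_of_nonneg (Int.natCast_nonneg N)])
    exact_mod_cast this
  have : 0 < α ^ 2 * ν / κ := by positivity
  linarith

/-- The second resonant index set `R₂(j)` is empty: if `N² ≥ (8/7)·(α²ν/κ)`, there are no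
integers `k, l` with `|k| > N`, `|l| > N` and `ρ_k + ρ_l = ρ_{k+l}`. -/
theorem stmt_0 (ν δ κ α : ℝ) (hν : 0 < ν) (hδ : 0 < δ) (hκ : 0 < κ) (hα : 0 < α)
    (N : ℕ) (hN : 0 < N) (hN2 : (N : ℝ) ^ 2 ≥ (8 / 7) * (α ^ 2 * ν / κ)) :
    ¬ ∃ k l : ℤ, (N : ℤ) < |k| ∧ (N : ℤ) < |l| ∧
      gksEig ν δ κ α k + gksEig ν δ κ α l = gksEig ν δ κ α (k + l) :=
  stmt_0_general ν δ κ α hν hδ hκ hα N hN2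
end

section
/- Let ν, κ, α > 0 and set r := α²ν/κ. If k, l are integers with k·l ≠ 0, j := k + l, and the real-part resonance identity −ν((k/α)² + (l/α)²) + κ((k/α)⁴ + (l/α)⁴) = −ν(j/α)² + κ(j/α)⁴ holds, then r − 3kl = 2(k² + l²). -/
/-! Multiplying by `α⁴`, the real-part resonance identity says
`ν α² · 2kl = κ ((k + l)⁴ - k⁴ - l⁴) = κ · 2kl (2k² + 3kl + 2l²)`;
cancelling `2κkl ≠ 0` gives `α²ν/κ = 2k² + 3kl + 2l²`. -/

section Resonance

variable {F : Type*} [Field F]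

theorem resonance_defect_eq (ν κ : F) {α : F} (hα : α ≠ 0) (x y : F) :
    (-ν * ((x + y) / α) ^ 2 + κ * ((x + y) / α) ^ 4)
        - (-ν * ((x / α) ^ 2 + (y / α) ^ 2) + κ * ((x / α) ^ 4 + (y / α) ^ 4))
      = 2 * x * y / α ^ 4 * (κ * (2 * x ^ 2 + 3 * x * y + 2 * y ^ 2) - α ^ 2 * ν) := by
  field_simp
  ring

theorem sq_mul_div_eq_of_resonance [NeZero (2 : F)] {ν κ α x y : F} (hκ : κ ≠ 0)
    (hα : α ≠ 0) (hxy : x * y ≠ 0)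
    (hres : -ν * ((x / α) ^ 2 + (y / α) ^ 2) + κ * ((x / α) ^ 4 + (y / α) ^ 4)
      = -ν * ((x + y) / α) ^ 2 + κ * ((x + y) / α) ^ 4) :
    α ^ 2 * ν / κ = 2 * x ^ 2 + 3 * x * y + 2 * y ^ 2 := by
  have hdefect := resonance_defect_eq ν κ hα x y
  rw [hres, sub_self, eq_comm, mul_eq_zero] at hdefect
  have hfactor : 2 * x * y / α ^ 4 ≠ 0 := by
    rw [mul_assoc]
    exact div_ne_zero (mul_ne_zero two_ne_zero hxy) (pow_ne_zero 4 hα)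
  rw [div_eq_iff hκ, ← sub_eq_zero, ← neg_eq_zero, neg_sub, mul_comm _ κ]
  exact hdefect.resolve_left hfactor

end Resonance

theorem stmt_1_general (ν κ α : ℝ) (hκ : 0 < κ) (hα : 0 < α)
    (r : ℝ) (hr : r = α ^ 2 * ν / κ) (k l : ℤ) (hkl : k * l ≠ 0) (j : ℤ) (hj : j = k + l)
    (hres : -ν * (((k : ℝ) / α) ^ 2 + ((l : ℝ) / α) ^ 2)
        + κ * (((k : ℝ) / α) ^ 4 + ((l : ℝ) / α) ^ 4)
      = -ν * ((j : ℝ) / α) ^ 2 + κ * ((j : ℝ) / α) ^ 4) :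
    r - 3 * ((k : ℝ) * (l : ℝ)) = 2 * ((k : ℝ) ^ 2 + (l : ℝ) ^ 2) := by
  subst hj hr
  push_cast at hres
  have hkl' : (k : ℝ) * l ≠ 0 := by exact_mod_cast hkl
  rw [sq_mul_div_eq_of_resonance hκ.ne' hα.ne' hkl' hres]
  ring

/-- Derivation of equation (star) in the appendix: the real parts of the resonance condition
`ρ_k + ρ_l = ρ_j` with `j = k + l` and `k·l ≠ 0` reduce to `r - 3kl = 2(k² + l²)`,
where `r = α²ν/κ`. -/
theorem stmt_1 (ν κ α : ℝ) (hν : 0 < ν) (hκ : 0 < κ) (hα : 0 < α)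
    (r : ℝ) (hr : r = α ^ 2 * ν / κ) (k l : ℤ) (hkl : k * l ≠ 0) (j : ℤ) (hj : j = k + l)
    (hres : -ν * (((k : ℝ) / α) ^ 2 + ((l : ℝ) / α) ^ 2)
        + κ * (((k : ℝ) / α) ^ 4 + ((l : ℝ) / α) ^ 4)
      = -ν * ((j : ℝ) / α) ^ 2 + κ * ((j : ℝ) / α) ^ 4) :
    r - 3 * ((k : ℝ) * (l : ℝ)) = 2 * ((k : ℝ) ^ 2 + (l : ℝ) ^ 2) :=
  stmt_1_general ν κ α hκ hα r hr k l hkl j hj hres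
end
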